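/- arXiv:2112.10195 — 6 statements merged into one kernel-verified Lean document; each statement's English description precedes it below -/
import Mathlib

section
/- Let M be a metric space, ε > 0, k a natural number, and let C', F', F* be subsets of M with F* finite and |F*| ≤ k. Suppose that (i) for every p ∈ C' there exists i ∈ F* with dist(p, i) ≤ 1, and (ii) for every i ∈ F* such that there exists p ∈ C' with dist(i, p) ≤ 1, there exists i' ∈ F' with dist(i, i') ≤ ε. Then there exists a finite set F'' ⊆ F' with |F''| ≤ k such that for every p ∈ C' there exists i ∈ F'' with dist(p, i) ≤ 1 + ε. -/
/-- Forward direction of the filtering lemma for k-supplier. -/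
theorem filtering_forward {M : Type*} [MetricSpace M] (ε : ℝ) (hε : 0 < ε) (k : ℕ)
    (C' F' Fstar : Set M) (hfin : Fstar.Finite) (hcard : Fstar.ncard ≤ k)
    (hcover : ∀ p ∈ C', ∃ i ∈ Fstar, dist p i ≤ 1)
    (hnear : ∀ i ∈ Fstar, (∃ p ∈ C', dist i p ≤ 1) → ∃ i' ∈ F', dist i i' ≤ ε) :
    ∃ F'' : Set M, F'' ⊆ F' ∧ F''.Finite ∧ F''.ncard ≤ k ∧
      ∀ p ∈ C', ∃ i ∈ F'', dist p i ≤ 1 + ε := by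
  classical
  set S : Set M := {i ∈ Fstar | ∃ p ∈ C', dist i p ≤ 1} with hS
  have hSsub : S ⊆ Fstar := fun i hi => hi.1
  have hSfin : S.Finite := hfin.subset hSsub
  have hchoice : ∀ i ∈ S, ∃ i' ∈ F', dist i i' ≤ ε := fun i hi =>
    hnear i hi.1 hi.2
  choose f hf1 hf2 using hchoice
  let g : M → M := fun i => if h : i ∈ S then f i h else i
  refine ⟨g '' S, ?_, hSfin.image g, ?_, ?_⟩
  · rintro _ ⟨i, hi, rfl⟩
    simpa [g, dif_pos hi] using hf1 i hi
  · exact (Set.ncard_image_le hSfin).trans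
      ((Set.ncard_le_ncard hSsub hfin).trans hcard)
  · intro p hp
    obtain ⟨i, hiF, hdi⟩ := hcover p hp
    have hiS : i ∈ S := ⟨hiF, p, hp, by rwa [dist_comm]⟩
    refine ⟨g i, ⟨i, hiS, rfl⟩, ?_⟩
    calc dist p (g i) ≤ dist p i + dist i (g i) := dist_triangle _ _ _
      _ ≤ 1 + ε := add_le_add hdi (by simpa [g, dif_pos hiS] using hf2 i hiS)
end

section
/- Let d ≥ 1, let W be a finite set of points in Euclidean space ℝ^d, and let X₁, X₂, Z be pairwise disjoint sets with W = X₁ ∪ X₂ ∪ Z. For w ∈ W let Vor_W(w) = {x ∈ ℝ^d : dist(x, w) ≤ dist(x, w') for all w' ∈ W} be the Voronoi cell of w. Suppose that for every p ∈ X₁ and q ∈ X₂ the cells Vor_W(p) and Vor_W(q) are disjoint. Then for every p ∈ X₁ and every i ∈ X₂ there exists q ∈ Z with dist(q, i) ≤ 2 · dist(p, i). -/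
/-- Voronoi separator lemma: if the Voronoi cells of points of `X₁` and of `X₂`
(in the Voronoi diagram of `W = X₁ ∪ X₂ ∪ Z`) share no point, then for every
`p ∈ X₁` and `i ∈ X₂` some separator point `q ∈ Z` satisfies
`dist q i ≤ 2 · dist p i`. -/
theorem voronoi_separator (d : ℕ) (hd : 1 ≤ d)
    (W X₁ X₂ Z : Finset (EuclideanSpace ℝ (Fin d)))
    (h12 : Disjoint X₁ X₂) (h1Z : Disjoint X₁ Z) (h2Z : Disjoint X₂ Z)
    (hW : (↑W : Set (EuclideanSpace ℝ (Fin d))) = ↑X₁ ∪ ↑X₂ ∪ ↑Z)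
    (hVor : ∀ p ∈ X₁, ∀ q ∈ X₂,
      Disjoint {x : EuclideanSpace ℝ (Fin d) | ∀ w' ∈ W, dist x p ≤ dist x w'}
               {x : EuclideanSpace ℝ (Fin d) | ∀ w' ∈ W, dist x q ≤ dist x w'}) :
    ∀ p ∈ X₁, ∀ i ∈ X₂, ∃ q ∈ Z, dist q i ≤ 2 * dist p i := by
  intro p hp i hi
  set Vor : EuclideanSpace ℝ (Fin d) → Set (EuclideanSpace ℝ (Fin d)) :=
    fun w => {x | ∀ w' ∈ W, dist x w ≤ dist x w'} with hVorDef
  have hVorClosed : ∀ w, IsClosed (Vor w) := by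
    intro w
    have : Vor w = ⋂ w' ∈ W, {x : EuclideanSpace ℝ (Fin d) | dist x w ≤ dist x w'} := by
      ext x; simp [hVorDef]
    rw [this]
    exact isClosed_biInter fun w' _ =>
      isClosed_le (Continuous.dist continuous_id continuous_const)
        (Continuous.dist continuous_id continuous_const)
  set A : Set (EuclideanSpace ℝ (Fin d)) := ⋃ w ∈ X₁, Vor w with hA
  set B : Set (EuclideanSpace ℝ (Fin d)) := ⋃ w ∈ X₂, Vor w with hB
  have hAclosed : IsClosed A := (X₁.finite_toSet).isClosed_biUnion fun w _ => hVorClosed w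
  have hBclosed : IsClosed B := (X₂.finite_toSet).isClosed_biUnion fun w _ => hVorClosed w
  have hABdisj : ∀ x, x ∈ A → x ∈ B → False := by
    intro x hxA hxB
    obtain ⟨w1, hw1, hx1⟩ := Set.mem_iUnion₂.1 hxA
    obtain ⟨w2, hw2, hx2⟩ := Set.mem_iUnion₂.1 hxB
    exact Set.disjoint_left.1 (hVor w1 hw1 w2 hw2) hx1 hx2
  have hpW : p ∈ W := by
    have : p ∈ (↑W : Set (EuclideanSpace ℝ (Fin d))) := by
      rw [hW]; exact Or.inl (Or.inl hp)
    exact_mod_cast this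
  have hiW : i ∈ W := by
    have : i ∈ (↑W : Set (EuclideanSpace ℝ (Fin d))) := by
      rw [hW]; exact Or.inl (Or.inr hi)
    exact_mod_cast this
  have hpA : p ∈ A := Set.mem_iUnion₂.2 ⟨p, hp, fun w' _ => by simpa using dist_nonneg⟩
  have hiB : i ∈ B := Set.mem_iUnion₂.2 ⟨i, hi, fun w' _ => by simpa using dist_nonneg⟩
  have hseg : IsPreconnected (segment ℝ p i) := (convex_segment p i).isPreconnected
  have hsub : segment ℝ p i ⊆ Aᶜ ∪ Bᶜ := by
    intro x _
    by_cases hxA : x ∈ A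
    · exact Or.inr fun hxB => hABdisj x hxA hxB
    · exact Or.inl hxA
  have hne1 : (segment ℝ p i ∩ Aᶜ).Nonempty :=
    ⟨i, right_mem_segment ℝ p i, fun hxA => hABdisj i hxA hiB⟩
  have hne2 : (segment ℝ p i ∩ Bᶜ).Nonempty :=
    ⟨p, left_mem_segment ℝ p i, fun hxB => hABdisj p hpA hxB⟩
  obtain ⟨x, hxseg, hxA, hxB⟩ :=
    hseg Aᶜ Bᶜ hAclosed.isOpen_compl hBclosed.isOpen_compl hsub hne1 hne2
  have hWne : W.Nonempty := ⟨p, hpW⟩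
  obtain ⟨q, hqW, hqmin⟩ := W.exists_min_image (fun w => dist x w) hWne
  have hxq : x ∈ Vor q := fun w' hw' => hqmin w' hw'
  have hqZ : q ∈ Z := by
    have hq' : q ∈ (↑X₁ : Set (EuclideanSpace ℝ (Fin d))) ∪ ↑X₂ ∪ ↑Z := by
      rw [← hW]; exact_mod_cast hqW
    rcases hq' with (h | h) | h
    · exact absurd (Set.mem_iUnion₂.2 ⟨q, h, hxq⟩) hxA
    · exact absurd (Set.mem_iUnion₂.2 ⟨q, h, hxq⟩) hxB
    · exact_mod_cast h
  refine ⟨q, hqZ, ?_⟩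
  have hxi : dist x q ≤ dist x i := hqmin i hiW
  have hsegdist : dist p x + dist x i = dist p i := by
    obtain ⟨a, b, ha, hb, hab, hx⟩ := hxseg
    have hx' : x = p + b • (i - p) := by
      rw [← hx]; rw [show a = 1 - b by linarith]; module
    rw [hx', dist_eq_norm, dist_eq_norm, dist_eq_norm]
    have e1 : p - (p + b • (i - p)) = (-b) • (i - p) := by module
    have e2 : p + b • (i - p) - i = (b - 1) • (i - p) := by module
    have e3 : p - i = (-1 : ℝ) • (i - p) := by module
    rw [e1, e2, e3, norm_smul, norm_smul, norm_smul]
    have f1 : ‖(-b : ℝ)‖ = b := by rw [Real.norm_eq_abs, abs_neg, abs_of_nonneg hb]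
    have f2 : ‖(b - 1 : ℝ)‖ = 1 - b := by
      rw [Real.norm_eq_abs, abs_of_nonpos (by linarith)]; ring
    have f3 : ‖(-1 : ℝ)‖ = 1 := by norm_num
    rw [f1, f2, f3]; ring
  have hxile : dist x i ≤ dist p i := by
    have := dist_nonneg (x := p) (y := x); linarith
  calc dist q i ≤ dist q x + dist x i := dist_triangle q x i
    _ = dist x q + dist x i := by rw [dist_comm]
    _ ≤ dist x i + dist x i := by linarith
    _ ≤ 2 * dist p i := by linarith
end

section
/- Let d ≥ 1, let T be a finite nonempty set of points in Euclidean space ℝ^d, and let (c, r) be a minimum enclosing ball of T, i.e., T is contained in the closed ball of radius r around c, and for every c' ∈ ℝ^d and r' ≥ 0 such that T is contained in the closed ball of radius r' around c', one has r ≤ r'. Then for every point z ∈ ℝ^d there exists z' ∈ T with dist(z, z')² ≥ r² + dist(z, c)². -/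
open RealInnerProductSpace


/-- Goel–Indyk–Varadarajan lemma: for a minimum enclosing ball `(c, r)` of `T`,
any point `z` has some `z' ∈ T` with `dist z z' ≥ √(r² + dist z c²)`. -/
theorem meb_far_point (d : ℕ) (hd : 1 ≤ d) (T : Finset (EuclideanSpace ℝ (Fin d)))
    (hT : T.Nonempty) (c : EuclideanSpace ℝ (Fin d)) (r : ℝ)
    (hcover : ↑T ⊆ Metric.closedBall c r)
    (hmin : ∀ (c' : EuclideanSpace ℝ (Fin d)) (r' : ℝ), 0 ≤ r' →
      ↑T ⊆ Metric.closedBall c' r' → r ≤ r') :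
    ∀ z : EuclideanSpace ℝ (Fin d), ∃ z' ∈ T,
      r ^ 2 + dist z c ^ 2 ≤ dist z z' ^ 2 := by
  intro z
  by_contra hcon
  push_neg at hcon
  have hr0 : 0 ≤ r := by
    obtain ⟨p, hp⟩ := id hT
    have := hcover (Finset.mem_coe.mpr hp)
    simp only [Metric.mem_closedBall] at this
    exact le_trans dist_nonneg this
  set δ := T.inf' hT (fun z' => r ^ 2 + dist z c ^ 2 - dist z z' ^ 2) with hδdef
  have hδpos : 0 < δ := by
    rw [hδdef, Finset.lt_inf'_iff]
    intro z' hz'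
    have := hcon z' hz'
    linarith
  set Wn := ‖z - c‖ ^ 2 with hWn
  have hWnn : (0:ℝ) ≤ Wn := sq_nonneg _
  set ε := min 1 (δ / (2 * (Wn + 1))) with hεdef
  have hεpos : 0 < ε := lt_min one_pos (by positivity)
  have hε1 : ε ≤ 1 := min_le_left _ _
  have hεW : ε * (Wn + 1) ≤ δ / 2 := by
    have h1 : ε ≤ δ / (2 * (Wn + 1)) := min_le_right _ _
    have h2 : (0:ℝ) < Wn + 1 := by linarith
    calc ε * (Wn + 1) ≤ (δ / (2 * (Wn + 1))) * (Wn + 1) :=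
          mul_le_mul_of_nonneg_right h1 (le_of_lt h2)
      _ = δ / 2 := by field_simp
  set c' : EuclideanSpace ℝ (Fin d) := c + ε • (z - c) with hc'def
  have key : ∀ z' ∈ T, dist c' z' ^ 2 ≤ r ^ 2 - ε * δ / 2 := by
    intro z' hz'
    have h1 : dist z' c ≤ r := by
      have := hcover (Finset.mem_coe.mpr hz')
      simpa [Metric.mem_closedBall] using this
    have hA : ‖z' - c‖ ^ 2 ≤ r ^ 2 := by
      rw [← dist_eq_norm]
      nlinarith [dist_nonneg (x := z') (y := c)]
    have h2 : δ ≤ r ^ 2 + dist z c ^ 2 - dist z z' ^ 2 :=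
      Finset.inf'_le (fun z' => r ^ 2 + dist z c ^ 2 - dist z z' ^ 2) hz'
    have edzc : dist z c ^ 2 = Wn := by rw [hWn, dist_eq_norm]
    have edzz : dist z z' ^ 2 =
        ‖z' - c‖ ^ 2 - 2 * ⟪z' - c, z - c⟫ + ‖z - c‖ ^ 2 := by
      have e : dist z z' = ‖(z' - c) - (z - c)‖ := by
        rw [dist_comm, dist_eq_norm]
        congr 1
        abel
      rw [e, norm_sub_sq_real]
    have edc : dist c' z' ^ 2 =
        ‖z' - c‖ ^ 2 - 2 * (ε * ⟪z' - c, z - c⟫) + ε ^ 2 * ‖z - c‖ ^ 2 := by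
      have e : dist c' z' = ‖(z' - c) - ε • (z - c)‖ := by
        rw [dist_comm, dist_eq_norm, hc'def]
        congr 1
        abel
      rw [e, norm_sub_sq_real, real_inner_smul_right, norm_smul]
      simp [abs_of_pos hεpos]
      ring
    rw [edc]
    rw [edzz, edzc] at h2
    -- 2 I ≥ A - r² + δ (from h2), A ≤ r², ε bounds
    nlinarith [mul_le_mul_of_nonneg_left h2 (le_of_lt hεpos),
      mul_le_mul_of_nonneg_left hA (by linarith : (0:ℝ) ≤ 1 - ε),
      mul_le_mul_of_nonneg_left hεW (le_of_lt hεpos),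
      mul_pos hεpos hδpos, sq_nonneg ε, mul_nonneg (le_of_lt hεpos) hWnn]
  obtain ⟨p, hp⟩ := id hT
  have h0 : 0 ≤ r ^ 2 - ε * δ / 2 := le_trans (sq_nonneg _) (key p hp)
  set r' := Real.sqrt (r ^ 2 - ε * δ / 2) with hr'def
  have hr'0 : 0 ≤ r' := Real.sqrt_nonneg _
  have hcov' : ↑T ⊆ Metric.closedBall c' r' := by
    intro x hx
    simp only [Metric.mem_closedBall]
    rw [dist_comm]
    calc dist c' x = Real.sqrt (dist c' x ^ 2) := by
          rw [Real.sqrt_sq dist_nonneg]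
      _ ≤ r' := Real.sqrt_le_sqrt (key x (Finset.mem_coe.mp hx))
  have hle : r ≤ r' := hmin c' r' hr'0 hcov'
  have hsq : r ^ 2 ≤ r' ^ 2 := by nlinarith
  rw [hr'def, Real.sq_sqrt h0] at hsq
  nlinarith [mul_pos hεpos hδpos]
end

section
/- Let d ≥ 1, let T be a finite nonempty set of points in Euclidean space ℝ^d, and let (c, r) be a minimum enclosing ball of T, i.e., T is contained in the closed ball of radius r around c, and for every c' ∈ ℝ^d and r' ≥ 0 such that T is contained in the closed ball of radius r' around c', one has r ≤ r'. Then for every unit vector u ∈ ℝ^d there exists z' ∈ T with dist(c, z') = r and ⟨z' − c, u⟩ ≤ 0. -/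
open scoped RealInnerProductSpace

/-- Supporting-halfspace property of the MEB center: in every direction `u`
there is a point of `T` on the boundary sphere lying on the non-positive side. -/
theorem meb_supporting_halfspace (d : ℕ) (hd : 1 ≤ d)
    (T : Finset (EuclideanSpace ℝ (Fin d))) (hT : T.Nonempty)
    (c : EuclideanSpace ℝ (Fin d)) (r : ℝ)
    (hcover : ↑T ⊆ Metric.closedBall c r)
    (hmin : ∀ (c' : EuclideanSpace ℝ (Fin d)) (r' : ℝ), 0 ≤ r' →
      ↑T ⊆ Metric.closedBall c' r' → r ≤ r') :
    ∀ u : EuclideanSpace ℝ (Fin d), ‖u‖ = 1 →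
      ∃ z' ∈ T, dist c z' = r ∧ ⟪z' - c, u⟫ ≤ 0 := by
  intro u hu
  by_contra hcon
  push_neg at hcon
  -- every point of T can be strictly covered after moving center a bit in direction u
  have key : ∀ z ∈ T, ∃ ε0 > 0, ∀ ε : ℝ, 0 < ε → ε ≤ ε0 →
      dist (c + ε • u) z < r := by
    intro z hz
    have hzr : dist c z ≤ r := by
      have := hcover hz; simpa [Metric.mem_closedBall, dist_comm] using this
    rcases lt_or_eq_of_le hzr with hlt | heq
    · refine ⟨(r - dist c z) / 2, by linarith, fun ε hε hε0 => ?_⟩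
      have : dist (c + ε • u) z ≤ dist (c + ε • u) c + dist c z := dist_triangle _ _ _
      have h1 : dist (c + ε • u) c = ε := by
        rw [dist_eq_norm]
        simp [norm_smul, hu, abs_of_pos hε]
      linarith
    · have hp : 0 < ⟪z - c, u⟫ := hcon z hz heq
      refine ⟨⟪z - c, u⟫, hp, fun ε hε hε0 => ?_⟩
      have hr0 : 0 ≤ r := le_trans dist_nonneg hzr
      have hdist : dist (c + ε • u) z ^ 2
          = dist c z ^ 2 - 2 * ε * ⟪z - c, u⟫ + ε ^ 2 := by
        have : dist (c + ε • u) z = ‖(z - c) - ε • u‖ := by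
          rw [dist_eq_norm]
          rw [show c + ε • u - z = -((z - c) - ε • u) by abel, norm_neg]
        rw [this, @norm_sub_sq_real, real_inner_smul_right, norm_smul]
        simp [hu, dist_eq_norm']
        ring
      have hsq : dist (c + ε • u) z ^ 2 < r ^ 2 := by
        rw [hdist, ← heq]
        nlinarith
      exact lt_of_pow_lt_pow_left₀ 2 hr0 hsq
  choose! E hEpos hE using key
  set ε := T.inf' hT E with hεdef
  have hεpos : 0 < ε := by
    rw [hεdef, Finset.lt_inf'_iff]
    intro z hz; exact hEpos z hz
  have hall : ∀ z ∈ T, dist (c + ε • u) z < r := fun z hz =>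
    hE z hz ε hεpos (Finset.inf'_le E hz)
  set r' := T.sup' hT (dist (c + ε • u)) with hr'def
  have hr'0 : 0 ≤ r' := by
    obtain ⟨z, hz⟩ := hT
    exact le_trans dist_nonneg (Finset.le_sup' _ hz)
  have hr'lt : r' < r := by
    rw [hr'def, Finset.sup'_lt_iff]
    exact hall
  have : r ≤ r' := hmin (c + ε • u) r' hr'0 (fun z hz => by
    rw [Metric.mem_closedBall, dist_comm]
    exact Finset.le_sup' _ hz)
  linarith
end

section
/- Let λ : ℕ → ℝ be a sequence with λ(0) = 0 and λ(j+1) ≥ (1 + λ(j)²)/2 for every j ∈ ℕ. Then for every j ∈ ℕ, λ(j) ≥ 1 − 1/(1 + j/2), i.e., λ(j) ≥ j/(j + 2). -/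
/-- Solving the recurrence `λ(0) = 0`, `λ(j+1) ≥ (1 + λ(j)²)/2` gives
`λ(j) ≥ j/(j+2)`. -/
theorem lambda_recurrence (lam : ℕ → ℝ) (h0 : lam 0 = 0)
    (hrec : ∀ j : ℕ, (1 + lam j ^ 2) / 2 ≤ lam (j + 1)) :
    ∀ j : ℕ, (j : ℝ) / (j + 2) ≤ lam j := by
  intro j
  induction j with
  | zero => simp [h0]
  | succ n ih =>
    have hj : (0:ℝ) ≤ (n:ℝ) := Nat.cast_nonneg n
    have h1 : (0:ℝ) < (n:ℝ) + 2 := by linarith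
    have h2 : (0:ℝ) < (n:ℝ) + 3 := by linarith
    have hr := hrec n
    have hnn : (0:ℝ) ≤ lam n := le_trans (by positivity) ih
    have key : ((n:ℝ)+1) / ((n:ℝ)+3) ≤ (1 + lam n ^ 2) / 2 := by
      rw [div_le_div_iff₀ h2 (by norm_num)]
      have hsq : ((n:ℝ)^2/((n:ℝ)+2)^2) ≤ lam n ^ 2 := by
        rw [← div_pow]
        exact pow_le_pow_left₀ (by positivity) ih 2
      have hsq' : (n:ℝ)^2 ≤ lam n ^ 2 * ((n:ℝ)+2)^2 := by
        rw [div_le_iff₀ (by positivity)] at hsq; linarith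
      nlinarith [mul_pos h1 h1, sq_nonneg (n:ℝ)]
    have heq : ((n:ℝ)+1+2) = (n:ℝ)+3 := by ring
    push_cast
    rw [heq]
    linarith
end

section
/- Let d ≥ 1, let 0 < ε ≤ 1, let r > 0, and let P be a finite nonempty set of points of Euclidean space ℝ^d contained in the closed ball of radius r around some point c₀. Then there exists a nonempty subset S ⊆ P with |S| ≤ ⌈2/ε⌉ + 1 such that for every minimum enclosing ball (c, ρ) of S — i.e., every pair with S ⊆ closedBall(c, ρ) and ρ ≤ ρ' whenever S ⊆ closedBall(c', ρ') — the entire set P is contained in the closed ball of radius (1 + ε)·r around c. -/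
/-!
Grow the core-set greedily: while some point `p ∈ P` lies farther than `R = (1 + ε) r` from
the center `c` of a minimum enclosing ball `(c, ρ)` of `S`, add it. Minimality of `(c, ρ)` gives
the half-space property: for every `x` some `s ∈ S` has `ρ² + |c - x|² ≤ |s - x|²`. Applied to
the new center `c'`, together with `|p - c'| ≥ R - |c - c'|`, this forces the new radius to be
at least `(R² + ρ²) / (2R)`. Hence `1 - ρ / R` is bounded by the sequence `u ↦ u - u² / 2`
started at `1`, which stays below `2 / (n + 2)`; after `⌈2 / ε⌉` steps the radius would exceed
`r`, impossible inside a ball of radius `r`.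
-/

open Metric Finset AffineMap

section MetricSpace

variable {X : Type*} [PseudoMetricSpace X]

def IsMinEnclosingBall (S : Set X) (c : X) (ρ : ℝ) : Prop :=
  S ⊆ closedBall c ρ ∧ ∀ c' ρ', S ⊆ closedBall c' ρ' → ρ ≤ ρ'

namespace IsMinEnclosingBall

variable {c : X} {ρ : ℝ}

lemma radius_nonneg {S : Set X} (h : IsMinEnclosingBall S c ρ) (hS : S.Nonempty) : 0 ≤ ρ :=
  let ⟨_, hs⟩ := hS
  dist_nonneg.trans (h.1 hs)

lemma exists_le_dist {S : Finset X} (h : IsMinEnclosingBall (S : Set X) c ρ) (hS : S.Nonempty)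
    (c' : X) : ∃ s ∈ S, ρ ≤ dist s c' := by
  by_contra! hclose
  have hcover : (S : Set X) ⊆ closedBall c' (S.sup' hS fun s => dist s c') :=
    fun s hs => mem_closedBall.2 (le_sup' (fun s => dist s c') hs)
  exact ((sup'_lt_iff hS).2 hclose).not_ge (h.2 _ _ hcover)

end IsMinEnclosingBall

end MetricSpace

section InnerProductSpace

variable {E : Type*} [NormedAddCommGroup E] [InnerProductSpace ℝ E]

lemma dist_lineMap_sq (s c x : E) (t : ℝ) :
    dist s (lineMap c x t) ^ 2 =
      (1 - t) * dist s c ^ 2 + t * dist s x ^ 2 - t * (1 - t) * dist c x ^ 2 := by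
  have hsx : s - x = (s - c) - (x - c) := by abel
  have hst : s - lineMap c x t = (s - c) - t • (x - c) := by
    rw [lineMap_apply_module']; abel
  rw [dist_eq_norm, dist_eq_norm, dist_eq_norm, dist_eq_norm, norm_sub_rev c x, hst, hsx,
    norm_sub_sq_real (s - c) (t • (x - c)), norm_sub_sq_real (s - c) (x - c), inner_smul_right,
    norm_smul, Real.norm_eq_abs, mul_pow, sq_abs]
  ring

/-- Otherwise moving `c` a little towards `x` brings it strictly closer to every point of `S`. -/
lemma IsMinEnclosingBall.exists_sq_add_dist_sq_le {S : Finset E} {c : E} {ρ : ℝ}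
    (h : IsMinEnclosingBall (S : Set E) c ρ) (hS : S.Nonempty) (x : E) :
    ∃ s ∈ S, ρ ^ 2 + dist c x ^ 2 ≤ dist s x ^ 2 := by
  by_contra! hfar
  set δ := S.inf' hS fun s => ρ ^ 2 + dist c x ^ 2 - dist s x ^ 2
  have hδ : 0 < δ := (lt_inf'_iff hS).2 fun s hs => sub_pos.2 (hfar s hs)
  set t := min 1 (δ / (dist c x ^ 2 + 1))
  have ht0 : 0 < t := lt_min one_pos (by positivity)
  have ht1 : t ≤ 1 := min_le_left _ _
  have htδ : t * dist c x ^ 2 < δ := by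
    have : t * (dist c x ^ 2 + 1) ≤ δ := (le_div_iff₀ (by positivity)).1 (min_le_right _ _)
    linarith
  obtain ⟨s, hs, hρs⟩ := h.exists_le_dist hS (lineMap c x t)
  have hsc : dist s c ≤ ρ := h.1 hs
  have hsx : δ ≤ ρ ^ 2 + dist c x ^ 2 - dist s x ^ 2 :=
    inf'_le (fun s => ρ ^ 2 + dist c x ^ 2 - dist s x ^ 2) hs
  have hρ := h.radius_nonneg ⟨s, hs⟩
  have : dist s (lineMap c x t) ^ 2 < ρ ^ 2 := by
    rw [dist_lineMap_sq]
    nlinarith [pow_le_pow_left₀ dist_nonneg hsc 2]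
  exact this.not_ge (pow_le_pow_left₀ hρ hρs 2)

lemma sq_add_sq_le_two_mul_of_sub_le_of_sq_add_sq_le {ρ R δ ρ' : ℝ} (hρ : 0 ≤ ρ) (hρR : ρ ≤ R)
    (hρ' : 0 ≤ ρ') (hR : R - δ ≤ ρ') (hsq : ρ ^ 2 + δ ^ 2 ≤ ρ' ^ 2) :
    R ^ 2 + ρ ^ 2 ≤ 2 * R * ρ' := by
  rcases le_or_gt (2 * R * δ) (R ^ 2 - ρ ^ 2) with hnear | hfar
  · nlinarith
  · have hsq' : (R ^ 2 + ρ ^ 2) ^ 2 ≤ (2 * R * ρ') ^ 2 := by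
      nlinarith [mul_self_le_mul_self (by nlinarith : 0 ≤ R ^ 2 - ρ ^ 2) hfar.le]
    exact (pow_le_pow_iff_left₀ (by positivity) (by nlinarith) two_ne_zero).1 hsq'

lemma IsMinEnclosingBall.sq_add_sq_le_two_mul {S : Finset E} {c p c' : E} {ρ R ρ' : ℝ}
    (h : IsMinEnclosingBall (S : Set E) c ρ) (hS : S.Nonempty) (hρR : ρ ≤ R)
    (hp : R ≤ dist p c) (h' : insert p (S : Set E) ⊆ closedBall c' ρ') :
    R ^ 2 + ρ ^ 2 ≤ 2 * R * ρ' := by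
  obtain ⟨s, hs, hsq⟩ := h.exists_sq_add_dist_sq_le hS c'
  have hpc' : dist p c' ≤ ρ' := h' (Set.mem_insert p _)
  have hsc' : dist s c' ≤ ρ' := h' (Set.mem_insert_of_mem p hs)
  refine sq_add_sq_le_two_mul_of_sub_le_of_sq_add_sq_le (h.radius_nonneg ⟨s, hs⟩) hρR
    (dist_nonneg.trans hpc') (δ := dist c c') ?_ (hsq.trans (pow_le_pow_left₀ dist_nonneg hsc' 2))
  linarith [dist_triangle p c' c, dist_comm c c']

end InnerProductSpace

/-- `1 - gapSeq n` is the lower bound on `ρ / R` after `n` greedy steps: the step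
`ρ / R ↦ (1 + (ρ / R) ^ 2) / 2` becomes `u ↦ u - u ^ 2 / 2`. -/
noncomputable def gapSeq : ℕ → ℝ
  | 0 => 1
  | n + 1 => gapSeq n - gapSeq n ^ 2 / 2

lemma gapSeq_nonneg_and_le_one (n : ℕ) : 0 ≤ gapSeq n ∧ gapSeq n ≤ 1 := by
  induction n with
  | zero => norm_num [gapSeq]
  | succ n ih =>
    obtain ⟨h0, h1⟩ := ih
    simp only [gapSeq]
    constructor <;> nlinarith

lemma gapSeq_succ_lt_of_le {n : ℕ} (h : gapSeq n ≤ 2 / (n + 2)) :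
    gapSeq (n + 1) < 2 / (n + 1 + 2) := by
  obtain ⟨h0, h1⟩ := gapSeq_nonneg_and_le_one n
  set a : ℝ := 2 / (n + 2)
  have hm : (0 : ℝ) < n + 2 := by positivity
  have ha : a * (n + 2) = 2 := div_mul_cancel₀ _ hm.ne'
  have ha1 : a ≤ 1 := by nlinarith [n.cast_nonneg (α := ℝ)]
  have hmono : gapSeq n - gapSeq n ^ 2 / 2 ≤ a - a ^ 2 / 2 := by
    nlinarith [mul_nonneg (sub_nonneg.2 h) (by linarith : 0 ≤ 2 - a - gapSeq n)]
  have hval : a - a ^ 2 / 2 < 2 / (n + 1 + 2) := by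
    have ha2 : a ^ 2 * (n + 2) = 2 * a := by rw [sq, mul_assoc, ha]; ring
    have : 0 < a := by positivity
    rw [lt_div_iff₀ (by positivity)]
    nlinarith
  exact hmono.trans_lt hval

lemma gapSeq_le (n : ℕ) : gapSeq n ≤ 2 / (n + 2) := by
  induction n with
  | zero => norm_num [gapSeq]
  | succ n ih => exact_mod_cast (gapSeq_succ_lt_of_le ih).le

lemma one_lt_one_sub_gapSeq_ceil_mul {ε : ℝ} (hε : 0 < ε) :
    1 < (1 - gapSeq ⌈2 / ε⌉₊) * (1 + ε) := by
  obtain ⟨n, hn⟩ : ∃ n, ⌈2 / ε⌉₊ = n + 1 :=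
    Nat.exists_eq_add_one.2 (Nat.one_le_ceil_iff.2 (by positivity))
  have hgap := gapSeq_succ_lt_of_le (gapSeq_le n)
  have hceil := Nat.le_ceil (2 / ε)
  rw [hn] at hceil ⊢
  rw [div_le_iff₀ hε] at hceil
  rw [lt_div_iff₀ (by positivity)] at hgap
  push_cast at hceil ⊢
  nlinarith [mul_lt_mul_of_pos_right hgap (by linarith : (0 : ℝ) < 1 + ε)]

section Greedy

variable {E : Type*} [NormedAddCommGroup E] [InnerProductSpace ℝ E]

/-- The state after `n` greedy steps. Both alternatives speak about every minimum enclosing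
ball of `S`, so no existence theorem for such balls is needed. -/
lemma exists_subset_covers_or_le_radius (P : Finset E) (hP : P.Nonempty) {c₀ : E} {R : ℝ}
    (hR : 0 < R) (hPR : (P : Set E) ⊆ closedBall c₀ R) (n : ℕ) :
    ∃ S ⊆ P, S.Nonempty ∧ #S ≤ n + 1 ∧
      ((∀ c ρ, IsMinEnclosingBall (S : Set E) c ρ → (P : Set E) ⊆ closedBall c R) ∨
        ∀ c ρ, IsMinEnclosingBall (S : Set E) c ρ → (1 - gapSeq n) * R ≤ ρ) := by
  classical
  induction n with
  | zero =>
    obtain ⟨p, hp⟩ := hP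
    refine ⟨{p}, singleton_subset_iff.2 hp, singleton_nonempty p, by simp, Or.inr ?_⟩
    intro c ρ h
    simpa [gapSeq] using h.radius_nonneg (by simp)
  | succ n ih =>
    obtain ⟨S, hSP, hS, hcard, hcover | hlarge⟩ := ih
    · exact ⟨S, hSP, hS, hcard.trans (by omega), Or.inl hcover⟩
    by_cases hcover : ∀ c ρ, IsMinEnclosingBall (S : Set E) c ρ → (P : Set E) ⊆ closedBall c R
    · exact ⟨S, hSP, hS, hcard.trans (by omega), Or.inl hcover⟩
    push Not at hcover
    obtain ⟨c, ρ, hmeb, hout⟩ := hcover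
    obtain ⟨p, hpP, hpc⟩ := Set.not_subset.1 hout
    refine ⟨insert p S, insert_subset hpP hSP, insert_nonempty p S,
      (card_insert_le p S).trans (by omega), Or.inr fun c' ρ' hmeb' => ?_⟩
    have hρR : ρ ≤ R := hmeb.2 c₀ R ((coe_subset.2 hSP).trans hPR)
    have hgrow := hmeb.sq_add_sq_le_two_mul hS hρR (not_le.1 hpc).le
      (by simpa only [coe_insert] using hmeb'.1)
    have hρ := hlarge c ρ hmeb
    obtain ⟨hu0, hu1⟩ := gapSeq_nonneg_and_le_one n
    have : 2 * R * ((1 - gapSeq (n + 1)) * R) ≤ 2 * R * ρ' := by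
      simp only [gapSeq]
      nlinarith [mul_le_mul hρ hρ (by nlinarith) (hmeb.radius_nonneg (coe_nonempty.2 hS))]
    exact le_of_mul_le_mul_left this (by positivity)

end Greedy

theorem coreset_meb_general (d : ℕ) (ε : ℝ) (hε0 : 0 < ε)
    (r : ℝ) (hr : 0 < r) (c₀ : EuclideanSpace ℝ (Fin d))
    (P : Finset (EuclideanSpace ℝ (Fin d))) (hP : P.Nonempty)
    (hPball : ↑P ⊆ Metric.closedBall c₀ r) :
    ∃ S : Finset (EuclideanSpace ℝ (Fin d)), S ⊆ P ∧ S.Nonempty ∧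
      S.card ≤ ⌈(2 : ℝ) / ε⌉₊ + 1 ∧
      ∀ (c : EuclideanSpace ℝ (Fin d)) (ρ : ℝ),
        (↑S ⊆ Metric.closedBall c ρ ∧
          ∀ (c' : EuclideanSpace ℝ (Fin d)) (ρ' : ℝ),
            ↑S ⊆ Metric.closedBall c' ρ' → ρ ≤ ρ') →
        ↑P ⊆ Metric.closedBall c ((1 + ε) * r) := by
  have hrR : r ≤ (1 + ε) * r := by nlinarith
  obtain ⟨S, hSP, hS, hcard, hcover | hlarge⟩ :=
    exists_subset_covers_or_le_radius P hP (by positivity)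
      (hPball.trans (closedBall_subset_closedBall hrR)) ⌈(2 : ℝ) / ε⌉₊
  · exact ⟨S, hSP, hS, hcard, hcover⟩
  refine ⟨S, hSP, hS, hcard, fun c ρ hmeb => absurd (hlarge c ρ hmeb) ?_⟩
  have hρr : ρ ≤ r := hmeb.2 c₀ r ((coe_subset.2 hSP).trans hPball)
  have := one_lt_one_sub_gapSeq_ceil_mul hε0
  nlinarith

/-- Core-set guarantee (Bădoiu–Clarkson): every finite nonempty set `P` in a ball of
radius `r` has a core-set `S ⊆ P` of size at most `⌈2/ε⌉ + 1` such that for every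
minimum enclosing ball `(c, ρ)` of `S`, the ball of radius `(1+ε)r` around `c`
covers `P`. -/
theorem coreset_meb (d : ℕ) (hd : 1 ≤ d) (ε : ℝ) (hε0 : 0 < ε) (hε1 : ε ≤ 1)
    (r : ℝ) (hr : 0 < r) (c₀ : EuclideanSpace ℝ (Fin d))
    (P : Finset (EuclideanSpace ℝ (Fin d))) (hP : P.Nonempty)
    (hPball : ↑P ⊆ Metric.closedBall c₀ r) :
    ∃ S : Finset (EuclideanSpace ℝ (Fin d)), S ⊆ P ∧ S.Nonempty ∧
      S.card ≤ ⌈(2 : ℝ) / ε⌉₊ + 1 ∧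
      ∀ (c : EuclideanSpace ℝ (Fin d)) (ρ : ℝ),
        (↑S ⊆ Metric.closedBall c ρ ∧
          ∀ (c' : EuclideanSpace ℝ (Fin d)) (ρ' : ℝ),
            ↑S ⊆ Metric.closedBall c' ρ' → ρ ≤ ρ') →
        ↑P ⊆ Metric.closedBall c ((1 + ε) * r) :=
  coreset_meb_general d ε hε0 r hr c₀ P hP hPball
end
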